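/- arXiv:1702.03545 — 4 statements merged into one kernel-verified Lean document; each statement's English description precedes it below -/
import Mathlib

section
/- In the category of sets with functions as morphisms, two subsets A and B of a set C (viewed as subobjects via inclusion maps) are Mor-independent — i.e., for every pair of functions α : A → A and β : B → B there exists a function γ : C → C with γ restricted to A equal to α and γ restricted to B equal to β — if and only if A and B are disjoint, provided A and B each have at least two elements. -/
/-- In the category of sets, two subsets `A`, `B` of `C` (as subobjects via the
inclusion maps) are Mor-independent iff they are disjoint, provided each has at
least two elements. -/
theorem stmt_0 {C : Type*} (A B : Set C)
    (hA : ∃ a₁ a₂ : A, a₁ ≠ a₂) (hB : ∃ b₁ b₂ : B, b₁ ≠ b₂) :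
    (∀ (α : A → A) (β : B → B), ∃ γ : C → C,
      (∀ a : A, γ a = α a) ∧ (∀ b : B, γ b = β b)) ↔ Disjoint A B := by
  classical
  constructor
  · intro h
    rw [Set.disjoint_left]
    intro x hxA hxB
    exfalso
    obtain ⟨a₁, a₂, ha⟩ := hA
    obtain ⟨b₁, b₂, hb⟩ := hB
    -- pick a ∈ A with (a : C) ≠ (b₁ : C)
    have : ∃ a : A, (a : C) ≠ (b₁ : C) := by
      by_contra hc
      push_neg at hc
      exact ha (Subtype.ext ((hc a₁).trans (hc a₂).symm))
    obtain ⟨a, hab⟩ := this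
    obtain ⟨γ, h1, h2⟩ := h (fun _ => a) (fun _ => b₁)
    have e1 := h1 ⟨x, hxA⟩
    have e2 := h2 ⟨x, hxB⟩
    exact hab (e1.symm.trans e2)
  · intro hdisj α β
    refine ⟨fun c => if h : c ∈ A then α ⟨c, h⟩ else if h : c ∈ B then β ⟨c, h⟩ else c, ?_, ?_⟩
    · intro a; simp
    · intro b
      have hbA : (b : C) ∉ A := fun hbA => Set.disjoint_left.mp hdisj hbA b.2
      simp [hbA]
end

section
/- In a regular monoidal category, tensor-independence of subobjects of an injective object implies independence: suppose f_A : A → Q and f_B : B → Q are monomorphisms, Q is injective (every morphism from a subobject into Q along a monomorphism into Q extends to an endomorphism of Q, in the sense that for every monomorphism m : X → Q and every morphism n : X → Q there exists j : Q → Q with m ≫ j = n), and there exist monomorphisms u, v : A ⊗ B → Q with i_A ≫ u = f_A, i_B ≫ u = f_B, i_A ≫ v = f_A, i_B ≫ v = f_B. Then for all endomorphisms α_A : A → A, α_B : B → B there exists j : Q → Q with f_A ≫ j = α_A ≫ f_A and f_B ≫ j = α_B ≫ f_B. -/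
open CategoryTheory MonoidalCategory

/-! The endomorphism `αA ⊗ αB` of `A ⊗ B` restricts to `αA` and `αB` along the canonical
injections. Transporting it along `u` and `v` gives a map from the subobject `u` into `Q`,
which injectivity of `Q` extends to the required endomorphism `j` of `Q`. -/

theorem comp_eq_comp_of_comp_eq_comp {𝒞 : Type*} [Category 𝒞] {X X' Y Y' Q Q' : 𝒞}
    {i : Y ⟶ X} {i₂ : Y' ⟶ X'} {h : X ⟶ X'} {α : Y ⟶ Y'} {u : X ⟶ Q} {j : Q ⟶ Q'}
    {v : X' ⟶ Q'} {f : Y ⟶ Q} {g : Y' ⟶ Q'} (hj : u ≫ j = h ≫ v) (hh : i ≫ h = α ≫ i₂)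
    (hu : i ≫ u = f) (hv : i₂ ≫ v = g) : f ≫ j = α ≫ g := by
  calc f ≫ j = i ≫ u ≫ j := by rw [← hu, Category.assoc]
    _ = i ≫ h ≫ v := by rw [hj]
    _ = α ≫ g := by rw [← Category.assoc, hh, Category.assoc, hv]

theorem stmt_10_general {𝒞 : Type*} [Category 𝒞] [MonoidalCategory 𝒞]
    (i : ∀ A B : 𝒞, A ⟶ A ⊗ B) (i' : ∀ A B : 𝒞, B ⟶ A ⊗ B)
    (hnat : ∀ {A A' B B' : 𝒞} (mA : A ⟶ A') (mB : B ⟶ B'),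
      i A B ≫ (mA ⊗ₘ mB) = mA ≫ i A' B' ∧ i' A B ≫ (mA ⊗ₘ mB) = mB ≫ i' A' B')
    {A B Q : 𝒞} (fA : A ⟶ Q) (fB : B ⟶ Q)
    (hinj : ∀ {X : 𝒞} (m : X ⟶ Q), Mono m → ∀ n : X ⟶ Q, ∃ j : Q ⟶ Q, m ≫ j = n)
    (u v : A ⊗ B ⟶ Q) (hu : Mono u)
    (huA : i A B ≫ u = fA) (huB : i' A B ≫ u = fB)
    (hvA : i A B ≫ v = fA) (hvB : i' A B ≫ v = fB)
    (αA : A ⟶ A) (αB : B ⟶ B) :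
    ∃ j : Q ⟶ Q, fA ≫ j = αA ≫ fA ∧ fB ≫ j = αB ≫ fB := by
  obtain ⟨j, hj⟩ := hinj u hu ((αA ⊗ₘ αB) ≫ v)
  exact ⟨j, comp_eq_comp_of_comp_eq_comp hj (hnat αA αB).1 huA hvA,
    comp_eq_comp_of_comp_eq_comp hj (hnat αA αB).2 huB hvB⟩

/-- In a regular monoidal category, tensor-independence of subobjects of an
injective object implies independence. -/
theorem stmt_10 {𝒞 : Type*} [Category 𝒞] [MonoidalCategory 𝒞]
    (i : ∀ A B : 𝒞, A ⟶ A ⊗ B) (i' : ∀ A B : 𝒞, B ⟶ A ⊗ B)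
    (hmono : ∀ A B : 𝒞, Mono (i A B) ∧ Mono (i' A B))
    (hnat : ∀ {A A' B B' : 𝒞} (mA : A ⟶ A') (mB : B ⟶ B'),
      i A B ≫ (mA ⊗ₘ mB) = mA ≫ i A' B' ∧ i' A B ≫ (mA ⊗ₘ mB) = mB ≫ i' A' B')
    {A B Q : 𝒞} (fA : A ⟶ Q) (fB : B ⟶ Q) [Mono fA] [Mono fB]
    (hinj : ∀ {X : 𝒞} (m : X ⟶ Q), Mono m → ∀ n : X ⟶ Q, ∃ j : Q ⟶ Q, m ≫ j = n)
    (u v : A ⊗ B ⟶ Q) (hu : Mono u) (hv : Mono v)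
    (huA : i A B ≫ u = fA) (huB : i' A B ≫ u = fB)
    (hvA : i A B ≫ v = fA) (hvB : i' A B ≫ v = fB)
    (αA : A ⟶ A) (αB : B ⟶ B) :
    ∃ j : Q ⟶ Q, fA ≫ j = αA ≫ fA ∧ fB ≫ j = αB ≫ fB :=
  stmt_10_general i i' hnat fA fB hinj u v hu huA huB hvA hvB αA αB
end

section
/- Internal direct sums of lattices are isomorphic to direct products: let L be a lattice with 0, and S, Q sublattices of L each containing 0, such that (1) every x ∈ L can be written as x = s ∨ q with s ∈ S, q ∈ Q, and (2) for all s ∈ S, q ∈ Q both s ▷ q and q ▷ s hold (where a ▷ b means (a ∨ z) ∧ b = z ∧ b for all z ∈ L). Then the map S × Q → L given by (s, q) ↦ s ∨ q is a lattice isomorphism from the product lattice S × Q onto L. -/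
/-- An internal direct sum of sublattices is isomorphic to the product lattice
via `(s, q) ↦ s ⊔ q`. -/
theorem stmt_14 {L : Type*} [Lattice L] [OrderBot L] (S Q : Sublattice L)
    (hS0 : (⊥ : L) ∈ S) (hQ0 : (⊥ : L) ∈ Q)
    (hgen : ∀ x : L, ∃ s ∈ S, ∃ q ∈ Q, x = s ⊔ q)
    (hdel : ∀ s ∈ S, ∀ q ∈ Q,
      (∀ z : L, (s ⊔ z) ⊓ q = z ⊓ q) ∧ (∀ z : L, (q ⊔ z) ⊓ s = z ⊓ s)) :
    Function.Bijective (fun p : S × Q => (p.1 : L) ⊔ (p.2 : L)) ∧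
    (∀ p p' : S × Q,
      (((p ⊔ p').1 : L) ⊔ ((p ⊔ p').2 : L)) = ((p.1 : L) ⊔ p.2) ⊔ ((p'.1 : L) ⊔ p'.2)) ∧
    (∀ p p' : S × Q,
      (((p ⊓ p').1 : L) ⊔ ((p ⊓ p').2 : L)) = ((p.1 : L) ⊔ p.2) ⊓ ((p'.1 : L) ⊔ p'.2)) := by
  have key1 : ∀ s ∈ S, ∀ q ∈ Q, ∀ t ∈ S, (s ⊔ q) ⊓ t = s ⊓ t := by
    intro s hs q hq t ht
    rw [sup_comm]
    exact (hdel t ht q hq).2 s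
  have key2 : ∀ s ∈ S, ∀ q ∈ Q, ∀ t ∈ Q, (s ⊔ q) ⊓ t = q ⊓ t := by
    intro s hs q hq t ht
    exact (hdel s hs t ht).1 q
  -- injectivity-style lemma
  have leS : ∀ s ∈ S, ∀ q ∈ Q, ∀ t ∈ S, t ≤ s ⊔ q → t ≤ s := by
    intro s hs q hq t ht h
    calc t = (s ⊔ q) ⊓ t := (inf_eq_right.mpr h).symm
    _ = s ⊓ t := key1 s hs q hq t ht
    _ ≤ s := inf_le_left
  have leQ : ∀ s ∈ S, ∀ q ∈ Q, ∀ t ∈ Q, t ≤ s ⊔ q → t ≤ q := by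
    intro s hs q hq t ht h
    calc t = (s ⊔ q) ⊓ t := (inf_eq_right.mpr h).symm
    _ = q ⊓ t := key2 s hs q hq t ht
    _ ≤ q := inf_le_left
  refine ⟨⟨?_, ?_⟩, ?_, ?_⟩
  · rintro ⟨⟨s, hs⟩, ⟨q, hq⟩⟩ ⟨⟨s', hs'⟩, ⟨q', hq'⟩⟩ h
    simp only at h
    have hs1 : s ≤ s' := leS s' hs' q' hq' s hs (h ▸ le_sup_left)
    have hs2 : s' ≤ s := leS s hs q hq s' hs' (h ▸ le_sup_left)
    have hq1 : q ≤ q' := leQ s' hs' q' hq' q hq (h ▸ le_sup_right)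
    have hq2 : q' ≤ q := leQ s hs q hq q' hq' (h ▸ le_sup_right)
    simp only [Prod.mk.injEq, Subtype.mk.injEq]
    exact ⟨le_antisymm hs1 hs2, le_antisymm hq1 hq2⟩
  · intro x
    obtain ⟨s, hs, q, hq, rfl⟩ := hgen x
    exact ⟨(⟨s, hs⟩, ⟨q, hq⟩), rfl⟩
  · rintro ⟨⟨s, hs⟩, ⟨q, hq⟩⟩ ⟨⟨s', hs'⟩, ⟨q', hq'⟩⟩
    simpa using sup_sup_sup_comm s s' q q'
  · rintro ⟨⟨s, hs⟩, ⟨q, hq⟩⟩ ⟨⟨s', hs'⟩, ⟨q', hq'⟩⟩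
    simp only [Prod.mk_inf_mk, Sublattice.coe_inf]
    refine le_antisymm ?_ ?_
    · exact sup_le (le_inf (inf_le_left.trans le_sup_left) (inf_le_right.trans le_sup_left))
        (le_inf (inf_le_left.trans le_sup_right) (inf_le_right.trans le_sup_right))
    · obtain ⟨s'', hs'', q'', hq'', hx⟩ := hgen ((s ⊔ q) ⊓ (s' ⊔ q'))
      rw [hx]
      have h1 : s'' ≤ s ⊔ q := le_sup_left.trans (hx ▸ inf_le_left)
      have h2 : s'' ≤ s' ⊔ q' := le_sup_left.trans (hx ▸ inf_le_right)
      have h3 : q'' ≤ s ⊔ q := le_sup_right.trans (hx ▸ inf_le_left)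
      have h4 : q'' ≤ s' ⊔ q' := le_sup_right.trans (hx ▸ inf_le_right)
      exact sup_le
        (le_sup_left.trans' (le_inf (leS s hs q hq s'' hs'' h1) (leS s' hs' q' hq' s'' hs'' h2)))
        (le_sup_right.trans' (le_inf (leQ s hs q hq q'' hq'' h3) (leQ s' hs' q' hq' q'' hq'' h4)))
end

section
/- Lifting of endomorphism pairs to internal direct sums: under the hypotheses of the internal direct sum decomposition L = S ⊕ Q of a lattice L (every element is s ∨ q with s ∈ S, q ∈ Q, and s ▷ q, q ▷ s for all s ∈ S, q ∈ Q), any lattice homomorphisms α : S → S and β : Q → Q extend jointly to a lattice homomorphism γ : L → L with γ(s) = α(s) for s ∈ S and γ(q) = β(q) for q ∈ Q, provided α(0) = 0 and β(0) = 0; namely, γ(s ∨ q) = α(s) ∨ β(q) is well-defined and a lattice homomorphism. -/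
/-- Pairs of lattice endomorphisms of the summands of an internal direct sum
extend jointly to a lattice endomorphism of the whole lattice. -/
theorem stmt_15 {L : Type*} [Lattice L] [OrderBot L] (S Q : Sublattice L)
    (hS0 : (⊥ : L) ∈ S) (hQ0 : (⊥ : L) ∈ Q)
    (hgen : ∀ x : L, ∃ s ∈ S, ∃ q ∈ Q, x = s ⊔ q)
    (hdel : ∀ s ∈ S, ∀ q ∈ Q,
      (∀ z : L, (s ⊔ z) ⊓ q = z ⊓ q) ∧ (∀ z : L, (q ⊔ z) ⊓ s = z ⊓ s))
    (α : S → S) (β : Q → Q)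
    (hαsup : ∀ s t : S, α (s ⊔ t) = α s ⊔ α t)
    (hαinf : ∀ s t : S, α (s ⊓ t) = α s ⊓ α t)
    (hα0 : (α ⟨⊥, hS0⟩ : L) = ⊥)
    (hβsup : ∀ s t : Q, β (s ⊔ t) = β s ⊔ β t)
    (hβinf : ∀ s t : Q, β (s ⊓ t) = β s ⊓ β t)
    (hβ0 : (β ⟨⊥, hQ0⟩ : L) = ⊥) :
    ∃ γ : L → L,
      (∀ a b : L, γ (a ⊔ b) = γ a ⊔ γ b) ∧
      (∀ a b : L, γ (a ⊓ b) = γ a ⊓ γ b) ∧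
      (∀ s : S, γ s = α s) ∧ (∀ q : Q, γ q = β q) ∧
      (∀ s ∈ S, ∀ q ∈ Q, ∀ hs hq, γ (s ⊔ q) = (α ⟨s, hs⟩ : L) ⊔ (β ⟨q, hq⟩ : L)) := by
  -- key absorption lemmas
  have keyS : ∀ u ∈ S, ∀ q ∈ Q, ∀ z : L, u ≤ z ⊔ q → u ≤ z := by
    intro u hu q hq z h
    have h2 := (hdel u hu q hq).2 z
    have heq : (q ⊔ z) ⊓ u = u := inf_eq_right.mpr (by rwa [sup_comm z q] at h)
    calc u = z ⊓ u := by rw [← h2, heq]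
    _ ≤ z := inf_le_left
  have keyQ : ∀ v ∈ Q, ∀ s ∈ S, ∀ z : L, v ≤ s ⊔ z → v ≤ z := by
    intro v hv s hs z h
    have h1 := (hdel s hs v hv).1 z
    have heq : (s ⊔ z) ⊓ v = v := inf_eq_right.mpr h
    calc v = z ⊓ v := by rw [← h1, heq]
    _ ≤ z := inf_le_left
  -- uniqueness of decomposition
  have uniq : ∀ s ∈ S, ∀ q ∈ Q, ∀ t ∈ S, ∀ r ∈ Q, s ⊔ q = t ⊔ r → s = t ∧ q = r := by
    intro s hs q hq t ht r hr h
    constructor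
    · exact le_antisymm (keyS s hs r hr t (h ▸ le_sup_left))
        (keyS t ht q hq s (h ▸ le_sup_left))
    · exact le_antisymm (keyQ q hq t ht r (h ▸ le_sup_right))
        (keyQ r hr s hs q (h ▸ le_sup_right))
  -- meet identity
  have meetid : ∀ s ∈ S, ∀ q ∈ Q, ∀ t ∈ S, ∀ r ∈ Q,
      (s ⊔ q) ⊓ (t ⊔ r) = (s ⊓ t) ⊔ (q ⊓ r) := by
    intro s hs q hq t ht r hr
    apply le_antisymm
    · obtain ⟨u, hu, v, hv, huv⟩ := hgen ((s ⊔ q) ⊓ (t ⊔ r))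
      have hule : u ≤ (s ⊔ q) ⊓ (t ⊔ r) := huv ▸ le_sup_left
      have hvle : v ≤ (s ⊔ q) ⊓ (t ⊔ r) := huv ▸ le_sup_right
      have hu1 : u ≤ s := keyS u hu q hq s (hule.trans inf_le_left)
      have hu2 : u ≤ t := keyS u hu r hr t (hule.trans inf_le_right)
      have hv1 : v ≤ q := keyQ v hv s hs q (hvle.trans inf_le_left)
      have hv2 : v ≤ r := keyQ v hv t ht r (hvle.trans inf_le_right)
      rw [huv]
      exact sup_le (le_sup_left.trans' (le_inf hu1 hu2))
        (le_sup_right.trans' (le_inf hv1 hv2))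
    · exact sup_le (le_inf (inf_le_left.trans le_sup_left) (inf_le_right.trans le_sup_left))
        (le_inf (inf_le_left.trans le_sup_right) (inf_le_right.trans le_sup_right))
  choose σ hσS τ hτQ hστ using hgen
  set γ : L → L := fun x => (α ⟨σ x, hσS x⟩ : L) ⊔ (β ⟨τ x, hτQ x⟩ : L) with hγ
  -- γ computes on decompositions
  have γeq : ∀ s, ∀ hs : s ∈ S, ∀ q, ∀ hq : q ∈ Q,
      γ (s ⊔ q) = (α ⟨s, hs⟩ : L) ⊔ (β ⟨q, hq⟩ : L) := by
    intro s hs q hq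
    obtain ⟨h1, h2⟩ := uniq (σ (s ⊔ q)) (hσS _) (τ (s ⊔ q)) (hτQ _) s hs q hq (hστ _).symm
    have e1 : (⟨σ (s ⊔ q), hσS _⟩ : S) = ⟨s, hs⟩ := Subtype.ext h1
    have e2 : (⟨τ (s ⊔ q), hτQ _⟩ : Q) = ⟨q, hq⟩ := Subtype.ext h2
    simp only [hγ, e1, e2]
  refine ⟨γ, ?_, ?_, ?_, ?_, fun s hs q hq hs' hq' => γeq s hs' q hq'⟩
  · intro a b
    have hab : a ⊔ b = (σ a ⊔ σ b) ⊔ (τ a ⊔ τ b) := by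
      conv_lhs => rw [hστ a, hστ b]
      exact sup_sup_sup_comm _ _ _ _
    have hmemS : σ a ⊔ σ b ∈ S := S.supClosed (hσS a) (hσS b)
    have hmemQ : τ a ⊔ τ b ∈ Q := Q.supClosed (hτQ a) (hτQ b)
    rw [hab, γeq _ hmemS _ hmemQ]
    have eα : (⟨σ a ⊔ σ b, hmemS⟩ : S) = ⟨σ a, hσS a⟩ ⊔ ⟨σ b, hσS b⟩ := rfl
    have eβ : (⟨τ a ⊔ τ b, hmemQ⟩ : Q) = ⟨τ a, hτQ a⟩ ⊔ ⟨τ b, hτQ b⟩ := rfl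
    rw [eα, eβ, hαsup, hβsup]
    show ((_ : S) : L) ⊔ ((_ : Q) : L) = _
    rw [Sublattice.coe_sup, Sublattice.coe_sup]
    exact sup_sup_sup_comm _ _ _ _
  · intro a b
    have hab : a ⊓ b = (σ a ⊓ σ b) ⊔ (τ a ⊓ τ b) := by
      conv_lhs => rw [hστ a, hστ b]
      exact meetid _ (hσS a) _ (hτQ a) _ (hσS b) _ (hτQ b)
    have hmemS : σ a ⊓ σ b ∈ S := S.infClosed (hσS a) (hσS b)
    have hmemQ : τ a ⊓ τ b ∈ Q := Q.infClosed (hτQ a) (hτQ b)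
    rw [hab, γeq _ hmemS _ hmemQ]
    have eα : (⟨σ a ⊓ σ b, hmemS⟩ : S) = ⟨σ a, hσS a⟩ ⊓ ⟨σ b, hσS b⟩ := rfl
    have eβ : (⟨τ a ⊓ τ b, hmemQ⟩ : Q) = ⟨τ a, hτQ a⟩ ⊓ ⟨τ b, hτQ b⟩ := rfl
    rw [eα, eβ, hαinf, hβinf]
    show ((_ : S) : L) ⊔ ((_ : Q) : L) = _
    rw [Sublattice.coe_inf, Sublattice.coe_inf]
    exact (meetid _ (α ⟨σ a, hσS a⟩).2 _ (β ⟨τ a, hτQ a⟩).2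
      _ (α ⟨σ b, hσS b⟩).2 _ (β ⟨τ b, hτQ b⟩).2).symm
  · intro s
    have h : (s : L) = (s : L) ⊔ (⊥ : L) := (sup_bot_eq _).symm
    rw [h, γeq _ s.2 _ hQ0, hβ0, sup_bot_eq]
  · intro q
    have h : (q : L) = (⊥ : L) ⊔ (q : L) := (bot_sup_eq _).symm
    rw [h, γeq _ hS0 _ q.2, hα0, bot_sup_eq]
end
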